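/- arXiv:2202.12994 — 2 statements merged into one kernel-verified Lean document; each statement's English description precedes it below -/
import Mathlib

section
/- Let α > 0 and let Ω : ℝ → ℝ be the piecewise constant function Ω(t) = λ*_k for t ∈ [k, k+1) with λ*_k ∈ [0,1]. If μ is a positive integer such that |λ*_{k+μ} − λ*_k| ≤ ε for all integers k with k ≥ −N (for some N with e^{−αN} ≤ ε), then the function H(t) = ∫_{−∞}^{t} e^{−α(t−s)} Ω(s) ds satisfies |H(t+μ) − H(t)| ≤ ε/α + e^{−α(t+N)}/α for all t ≥ −N; in particular shift-closeness of the sequence (λ*_k) transfers to shift-closeness of H. -/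
/-!
Translating the variable of integration by `μ` gives
`H (t + μ) - H t = ∫_{-∞}^t e^{-α(t-s)} (Ω (s + μ) - Ω s) ds`. Since `⌊s + μ⌋ = ⌊s⌋ + μ`, the factor
`Ω (s + μ) - Ω s` is at most `ε` in absolute value for `s > -N`, and at most `1` everywhere because
`Ω` takes values in `[0, 1]`. The kernel `e^{-α(t-s)}` has total mass `1/α` on `(-∞, t]` and mass
`e^{-α(t+N)}/α` on `(-∞, -N]`.
-/

open MeasureTheory Set Real

theorem integral_comp_add_right_Iic {E : Type*} [NormedAddCommGroup E] [NormedSpace ℝ E]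
    (c t : ℝ) (f : ℝ → E) : ∫ x in Iic t, f (x + c) = ∫ x in Iic (t + c), f x := by
  have A : MeasurableEmbedding fun x : ℝ => x + c :=
    (Homeomorph.addRight c).measurableEmbedding
  have := A.setIntegral_map (μ := volume) f (Iic (t + c))
  rw [map_add_right_eq_self volume c] at this
  rw [this, preimage_add_const_Iic, add_sub_cancel_right]

section ExpKernel

variable {α : ℝ}

theorem exp_neg_mul_sub (α t s : ℝ) : exp (-α * (t - s)) = exp (-α * t) * exp (α * s) := by
  rw [← exp_add]
  ring_nf

theorem integrableOn_exp_neg_mul_sub_Iic (hα : 0 < α) (t u : ℝ) :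
    IntegrableOn (fun s => exp (-α * (t - s))) (Iic u) := by
  simp_rw [exp_neg_mul_sub]
  exact (integrableOn_exp_mul_Iic hα u).const_mul (exp (-α * t))

theorem integral_exp_neg_mul_sub_Iic (hα : 0 < α) (t u : ℝ) :
    ∫ s in Iic u, exp (-α * (t - s)) = exp (-α * (t - u)) / α := by
  simp_rw [exp_neg_mul_sub]
  rw [integral_const_mul, integral_exp_mul_Iic hα, ← mul_div_assoc, ← exp_add]

theorem integrableOn_exp_neg_mul_sub_mul_Iic (hα : 0 < α) (t : ℝ) {g : ℝ → ℝ} {C : ℝ}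
    (hg : AEStronglyMeasurable g) (hgC : ∀ s, |g s| ≤ C) :
    IntegrableOn (fun s => exp (-α * (t - s)) * g s) (Iic t) :=
  (integrableOn_exp_neg_mul_sub_Iic hα t t).mul_bdd hg.restrict (ae_of_all _ hgC)

theorem abs_integral_exp_neg_mul_sub_mul_le (hα : 0 < α) {g : ℝ → ℝ} {ε u t : ℝ}
    (hε : 0 ≤ ε) (hut : u ≤ t) (hg_one : ∀ s, |g s| ≤ 1) (hg_ε : ∀ s, u < s → |g s| ≤ ε) :
    |∫ s in Iic t, exp (-α * (t - s)) * g s| ≤ ε / α + exp (-α * (t - u)) / α := by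
  set k : ℝ → ℝ := fun s => exp (-α * (t - s)) with hk
  have hk_pos : ∀ s, 0 < k s := fun s => exp_pos _
  have hpt : ∀ s, |k s * g s| ≤ ε * k s + (Iic u).indicator k s := by
    intro s
    rw [abs_mul, abs_of_pos (hk_pos s)]
    rcases le_or_gt s u with hsu | hus
    · rw [indicator_of_mem (mem_Iic.2 hsu)]
      nlinarith [hg_one s, hk_pos s]
    · rw [indicator_of_notMem (notMem_Iic.2 hus)]
      nlinarith [hg_ε s hus, hk_pos s]
  have hk_int : IntegrableOn k (Iic t) := integrableOn_exp_neg_mul_sub_Iic hα t t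
  have hind_int : IntegrableOn ((Iic u).indicator k) (Iic t) :=
    ((integrableOn_exp_neg_mul_sub_Iic hα t u).integrable_indicator measurableSet_Iic).integrableOn
  calc |∫ s in Iic t, k s * g s| ≤ ∫ s in Iic t, |k s * g s| := abs_integral_le_integral_abs
    _ ≤ ∫ s in Iic t, (ε * k s + (Iic u).indicator k s) :=
      integral_mono_of_nonneg (ae_of_all _ fun _ => abs_nonneg _)
        ((hk_int.const_mul ε).add hind_int) (ae_of_all _ hpt)
    _ = ε / α + exp (-α * (t - u)) / α := by
      rw [integral_add (hk_int.const_mul ε) hind_int, integral_const_mul,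
        setIntegral_indicator measurableSet_Iic, Iic_inter_Iic, min_eq_right hut, hk,
        integral_exp_neg_mul_sub_Iic hα, integral_exp_neg_mul_sub_Iic hα, sub_self, mul_zero,
        exp_zero]
      ring

theorem integral_exp_neg_mul_sub_mul_Iic_add_sub (hα : 0 < α) {f : ℝ → ℝ} {C : ℝ}
    (hf : Measurable f) (hfC : ∀ s, |f s| ≤ C) (t c : ℝ) :
    (∫ s in Iic (t + c), exp (-α * (t + c - s)) * f s) - ∫ s in Iic t, exp (-α * (t - s)) * f s =
      ∫ s in Iic t, exp (-α * (t - s)) * (f (s + c) - f s) := by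
  rw [← integral_comp_add_right_Iic, ← integral_sub]
  · congr 1 with s
    ring_nf
  · simp only [add_sub_add_right_eq_sub]
    exact integrableOn_exp_neg_mul_sub_mul_Iic hα t
      (hf.comp (measurable_add_const c)).aestronglyMeasurable fun s => hfC (s + c)
  · exact integrableOn_exp_neg_mul_sub_mul_Iic hα t hf.aestronglyMeasurable hfC

end ExpKernel

theorem shift_closeness_transfers_to_H_general
    (α : ℝ) (hα : 0 < α)
    (lam : ℤ → ℝ) (hlam : ∀ k, lam k ∈ Set.Icc (0 : ℝ) 1)
    (Ω : ℝ → ℝ) (hΩ : ∀ t : ℝ, Ω t = lam ⌊t⌋)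
    (ε : ℝ)
    (μ : ℕ)
    (N : ℕ)
    (hclose : ∀ k : ℤ, -(N : ℤ) ≤ k → |lam (k + μ) - lam k| ≤ ε)
    (H : ℝ → ℝ)
    (hH : ∀ t, H t = ∫ s in Set.Iic t, Real.exp (-α * (t - s)) * Ω s) :
    ∀ t : ℝ, -(N : ℝ) ≤ t →
      |H (t + μ) - H t| ≤ ε / α + Real.exp (-α * (t + N)) / α := by
  intro t ht
  have hΩ_meas : Measurable Ω := by
    rw [funext hΩ]
    exact (measurable_of_countable lam).comp Int.measurable_floor
  have hΩ_mem : ∀ s, Ω s ∈ Icc (0 : ℝ) 1 := fun s => hΩ s ▸ hlam _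
  have hΩ_bdd : ∀ s, |Ω s| ≤ 1 := fun s => abs_le.2 ⟨by linarith [(hΩ_mem s).1], (hΩ_mem s).2⟩
  rw [hH, hH, integral_exp_neg_mul_sub_mul_Iic_add_sub hα hΩ_meas hΩ_bdd, ← sub_neg_eq_add t]
  refine abs_integral_exp_neg_mul_sub_mul_le hα ((abs_nonneg _).trans (hclose 0 (by simp)))
    ht (fun s => ?_) (fun s hs => ?_)
  · obtain ⟨h₀, h₁⟩ := hΩ_mem s
    obtain ⟨h₀', h₁'⟩ := hΩ_mem (s + μ)
    exact abs_sub_le_iff.2 ⟨by linarith, by linarith⟩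
  · rw [hΩ, hΩ, Int.floor_add_natCast]
    exact hclose _ (Int.le_floor.2 (by push_cast; exact hs.le))

theorem shift_closeness_transfers_to_H
    (α : ℝ) (hα : 0 < α)
    (lam : ℤ → ℝ) (hlam : ∀ k, lam k ∈ Set.Icc (0 : ℝ) 1)
    (Ω : ℝ → ℝ) (hΩ : ∀ t : ℝ, Ω t = lam ⌊t⌋)
    (ε : ℝ) (hε : 0 < ε)
    (μ : ℕ) (hμ : 0 < μ)
    (N : ℕ) (hN : Real.exp (-α * N) ≤ ε)
    (hclose : ∀ k : ℤ, -(N : ℤ) ≤ k → |lam (k + μ) - lam k| ≤ ε)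
    (H : ℝ → ℝ)
    (hH : ∀ t, H t = ∫ s in Set.Iic t, Real.exp (-α * (t - s)) * Ω s) :
    ∀ t : ℝ, -(N : ℝ) ≤ t →
      |H (t + μ) - H t| ≤ ε / α + Real.exp (-α * (t + N)) / α :=
  shift_closeness_transfers_to_H_general α hα lam hlam Ω hΩ ε μ N hclose H hH
end

section
/- Let φ : ℝ → ℝ^m be unpredictable with data (ε₀, r, μ_k, ν_k), and let g : ℝ^m → ℝ^n be a map satisfying both a Lipschitz upper bound ‖g(u) − g(v)‖ ≤ L‖u − v‖ and a lower bound ‖g(u) − g(v)‖ ≥ l‖u − v‖ (0 < l ≤ L) on a set containing the range of φ. Then g ∘ φ is unpredictable with data (l·ε₀, r, μ_k, ν_k); in particular g ∘ φ is uniformly continuous and bounded. -/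
open Filter

/-- Definition 2 of the paper: an unpredictable function with data `(ε₀, r, μ, ν)`. -/
def UnpredictableWith {E : Type*} [NormedAddCommGroup E]
    (φ : ℝ → E) (ε₀ r : ℝ) (μ ν : ℕ → ℝ) : Prop :=
  UniformContinuous φ ∧ Bornology.IsBounded (Set.range φ) ∧
  0 < ε₀ ∧ 0 < r ∧
  Tendsto μ atTop atTop ∧ Tendsto ν atTop atTop ∧
  (∀ K : Set ℝ, IsCompact K →
    TendstoUniformlyOn (fun k t => φ (t + μ k)) φ atTop K) ∧
  (∀ k : ℕ, ∀ t ∈ Set.Icc (ν k - r) (ν k + r), ε₀ ≤ ‖φ (t + μ k) - φ t‖)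

theorem biLipschitz_transfer_of_unpredictability
    {m n : ℕ} (φ : ℝ → EuclideanSpace ℝ (Fin m))
    (ε₀ r : ℝ) (μ ν : ℕ → ℝ)
    (hφ : UnpredictableWith φ ε₀ r μ ν)
    (g : EuclideanSpace ℝ (Fin m) → EuclideanSpace ℝ (Fin n))
    (S : Set (EuclideanSpace ℝ (Fin m))) (hS : Set.range φ ⊆ S)
    (L l : ℝ) (hl : 0 < l) (hlL : l ≤ L)
    (hupper : ∀ u ∈ S, ∀ v ∈ S, ‖g u - g v‖ ≤ L * ‖u - v‖)
    (hlower : ∀ u ∈ S, ∀ v ∈ S, l * ‖u - v‖ ≤ ‖g u - g v‖) :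
    UnpredictableWith (fun t => g (φ t)) (l * ε₀) r μ ν := by
  obtain ⟨huc, hbd, hε, hr, hμ, hν, hconv, hsep⟩ := hφ
  have hL : 0 < L := lt_of_lt_of_le hl hlL
  have hmem : ∀ t : ℝ, φ t ∈ S := fun t => hS ⟨t, rfl⟩
  have key : ∀ s t : ℝ, dist (g (φ s)) (g (φ t)) ≤ L * dist (φ s) (φ t) := by
    intro s t
    rw [dist_eq_norm, dist_eq_norm]
    exact hupper _ (hmem s) _ (hmem t)
  refine ⟨?_, ?_, by positivity, hr, hμ, hν, ?_, ?_⟩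
  · rw [Metric.uniformContinuous_iff] at huc ⊢
    intro ε hε'
    obtain ⟨δ, hδ, h⟩ := huc (ε / L) (by positivity)
    refine ⟨δ, hδ, fun {a b} hab => ?_⟩
    calc dist (g (φ a)) (g (φ b)) ≤ L * dist (φ a) (φ b) := key a b
      _ < L * (ε / L) := by
          exact mul_lt_mul_of_pos_left (h hab) hL
      _ = ε := by field_simp
  · rw [Metric.isBounded_iff] at hbd ⊢
    obtain ⟨C, hC⟩ := hbd
    refine ⟨L * C, ?_⟩
    rintro x ⟨s, rfl⟩ y ⟨t, rfl⟩
    calc dist (g (φ s)) (g (φ t)) ≤ L * dist (φ s) (φ t) := key s t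
      _ ≤ L * C := by
          have := hC ⟨s, rfl⟩ ⟨t, rfl⟩
          exact mul_le_mul_of_nonneg_left this hL.le
  · intro K hK
    rw [Metric.tendstoUniformlyOn_iff]
    have hc := Metric.tendstoUniformlyOn_iff.mp (hconv K hK)
    intro ε hε'
    filter_upwards [hc (ε / L) (by positivity)] with k hk t ht
    calc dist (g (φ t)) (g (φ (t + μ k))) ≤ L * dist (φ t) (φ (t + μ k)) := key _ _
      _ < L * (ε / L) := mul_lt_mul_of_pos_left (hk t ht) hL
      _ = ε := by field_simp
  · intro k t ht
    calc l * ε₀ ≤ l * ‖φ (t + μ k) - φ t‖ :=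
          mul_le_mul_of_nonneg_left (hsep k t ht) hl.le
      _ ≤ ‖g (φ (t + μ k)) - g (φ t)‖ := hlower _ (hmem _) _ (hmem _)
end
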